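/- arXiv:2508.01606 — 3 statements merged into one kernel-verified Lean document; each statement's English description precedes it below -/
import Mathlib

section
/- Let T be a directed tree on V, v ∈ V, and let U, U' be ornaments of T at v. Then U ∩ U' is an ornament of T at v. Consequently, the meet in the ornamentation lattice of a directed tree is computed pointwise: (O₁ ∧ O₂)(v) = O₁(v) ∩ O₂(v). -/
/-- A directed path from `u` to `v` in the digraph `T` using only vertices of `U`. -/
def pathIn {V : Type*} (T : V → V → Prop) (U : Set V) (u v : V) : Prop :=
  Relation.ReflTransGen (fun a b => T a b ∧ a ∈ U ∧ b ∈ U) u v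

/-- An ornament of `T` at `v`. -/
def IsOrnament {V : Type*} (T : V → V → Prop) (v : V) (U : Set V) : Prop :=
  v ∈ U ∧ ∀ u ∈ U, pathIn T U u v

/-- An ornamentation of `T`. -/
def IsOrnamentation {V : Type*} (T : V → V → Prop) (O : V → Set V) : Prop :=
  (∀ v, IsOrnament T v (O v)) ∧ ∀ u v, u ∈ O v → O u ⊆ O v

/-- A walk in `fromRel T` all of whose steps are directed forward by `T` and lie in `U`. -/
inductive GoodWalk {V : Type*} (T : V → V → Prop) (U : Set V) :
    ∀ {u v : V}, (SimpleGraph.fromRel T).Walk u v → Prop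
  | nil {u : V} : GoodWalk T U (.nil (u := u))
  | cons {a b v : V} (h : (SimpleGraph.fromRel T).Adj a b)
      {p : (SimpleGraph.fromRel T).Walk b v} (hT : T a b) (ha : a ∈ U) (hb : b ∈ U)
      (hp : GoodWalk T U p) : GoodWalk T U (.cons h p)

theorem goodWalk_inter {V : Type*} {T : V → V → Prop} {U U' : Set V}
    {u v : V} {p : (SimpleGraph.fromRel T).Walk u v}
    (h : GoodWalk T U p) (h' : GoodWalk T U' p) : GoodWalk T (U ∩ U') p := by
  induction h with
  | nil => exact .nil
  | cons h hT ha hb hp ih =>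
    cases h' with
    | cons _ _ ha' hb' hp' => exact .cons h hT ⟨ha, ha'⟩ ⟨hb, hb'⟩ (ih hp')

theorem goodWalk_pathIn {V : Type*} {T : V → V → Prop} {U : Set V}
    {u v : V} {p : (SimpleGraph.fromRel T).Walk u v} (h : GoodWalk T U p) :
    pathIn T U u v := by
  induction h with
  | nil => exact Relation.ReflTransGen.refl
  | cons h hT ha hb hp ih => exact Relation.ReflTransGen.head ⟨hT, ha, hb⟩ ih

/-- If `T u w` and `q` is a good path starting at `w`, then the edge `u-w` is not in `q`. -/
theorem edge_not_mem {V : Type*} {T : V → V → Prop}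
    (hirr : ∀ v, ¬ T v v) (hasymm : ∀ u v, T u v → ¬ T v u) {U : Set V}
    {u w v : V} (q : (SimpleGraph.fromRel T).Walk w v) (hg : GoodWalk T U q)
    (hp : q.IsPath) (huw : T u w) : s(u, w) ∉ q.edges := by
  cases hg with
  | nil => simp
  | @cons _ x _ h q₂ hwx =>
    rw [SimpleGraph.Walk.cons_isPath_iff] at hp
    intro hmem
    rw [SimpleGraph.Walk.edges_cons, List.mem_cons] at hmem
    rcases hmem with heq | hmem
    · rw [Sym2.eq_iff] at heq
      rcases heq with ⟨rfl, rfl⟩ | ⟨rfl, -⟩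
      · exact hirr _ huw
      · exact hasymm _ _ huw hwx
    · exact hp.2 (q₂.snd_mem_support_of_mem_edges hmem)

theorem pathIn_exists_goodPath {V : Type*} {T : V → V → Prop}
    (htree : (SimpleGraph.fromRel T).IsTree)
    (hirr : ∀ v, ¬ T v v) (hasymm : ∀ u v, T u v → ¬ T v u) {U : Set V}
    {u v : V} (h : pathIn T U u v) :
    ∃ p : (SimpleGraph.fromRel T).Walk u v, p.IsPath ∧ GoodWalk T U p := by
  induction h using Relation.ReflTransGen.head_induction_on with
  | refl => exact ⟨.nil, SimpleGraph.Walk.IsPath.nil, .nil⟩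
  | @head a b hab _ ih =>
    obtain ⟨hT, haU, hbU⟩ := hab
    obtain ⟨q, hq, hgq⟩ := ih
    have hne : a ≠ b := fun h => hirr a (h ▸ hT)
    have hadj : (SimpleGraph.fromRel T).Adj a b := (SimpleGraph.fromRel_adj T a b).2 ⟨hne, Or.inl hT⟩
    classical
    have hnotmem : a ∉ q.support := by
      intro hmem
      have hq' := hq.takeUntil hmem
      have hcyc : (SimpleGraph.Walk.cons hadj (q.takeUntil a hmem)).IsCycle := by
        rw [SimpleGraph.Walk.cons_isCycle_iff]
        refine ⟨hq', fun he => ?_⟩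
        exact edge_not_mem hirr hasymm q hgq hq hT (q.edges_takeUntil_subset hmem he)
      exact htree.2 _ hcyc
    exact ⟨.cons hadj q, (SimpleGraph.Walk.cons_isPath_iff _ _).2 ⟨hq, hnotmem⟩,
      .cons hadj hT haU hbU hgq⟩

/-- For a directed tree `T`, the intersection of two ornaments at `v` is an ornament at `v`,
and consequently the meet in the ornamentation lattice is computed pointwise: the pointwise
intersection of two ornamentations is an ornamentation, and it is their greatest lower bound. -/
theorem tree_ornament_inter {V : Type*} (T : V → V → Prop)
    (htree : (SimpleGraph.fromRel T).IsTree)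
    (hirr : ∀ v, ¬ T v v) (hasymm : ∀ u v, T u v → ¬ T v u) :
    (∀ (v : V) (U U' : Set V), IsOrnament T v U → IsOrnament T v U' →
      IsOrnament T v (U ∩ U')) ∧
    ∀ O₁ O₂ : V → Set V, IsOrnamentation T O₁ → IsOrnamentation T O₂ →
      IsOrnamentation T (fun v => O₁ v ∩ O₂ v) ∧
      (∀ v, O₁ v ∩ O₂ v ⊆ O₁ v) ∧ (∀ v, O₁ v ∩ O₂ v ⊆ O₂ v) ∧
      (∀ O : V → Set V, IsOrnamentation T O → (∀ v, O v ⊆ O₁ v) → (∀ v, O v ⊆ O₂ v) →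
        ∀ v, O v ⊆ O₁ v ∩ O₂ v) := by
  have key : ∀ (v : V) (U U' : Set V), IsOrnament T v U → IsOrnament T v U' →
      IsOrnament T v (U ∩ U') := by
    intro v U U' ⟨hvU, hU⟩ ⟨hvU', hU'⟩
    refine ⟨⟨hvU, hvU'⟩, fun u ⟨huU, huU'⟩ => ?_⟩
    obtain ⟨p, hp, hgp⟩ := pathIn_exists_goodPath htree hirr hasymm (hU u huU)
    obtain ⟨p', hp', hgp'⟩ := pathIn_exists_goodPath htree hirr hasymm (hU' u huU')
    have : p = p' := by
      obtain ⟨q, -, hq⟩ := htree.existsUnique_path u v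
      rw [hq p hp, hq p' hp']
    subst this
    exact goodWalk_pathIn (goodWalk_inter hgp hgp')
  refine ⟨key, fun O₁ O₂ h1 h2 => ?_⟩
  refine ⟨⟨fun v => key v _ _ (h1.1 v) (h2.1 v), fun u v ⟨hu1, hu2⟩ x ⟨hx1, hx2⟩ =>
      ⟨h1.2 u v hu1 hx1, h2.2 u v hu2 hx2⟩⟩,
    fun v => Set.inter_subset_left, fun v => Set.inter_subset_right,
    fun O _ hO1 hO2 v x hx => ⟨hO1 v hx, hO2 v hx⟩⟩
end

section
/- Let T be a directed tree, and O₁, O₂ ornamentations of T. Then O₁ ⋖ O₂ is a cover relation in the ornamentation lattice Orn(T) if and only if there exist vertices u, v with u ∉ O₁(v), O₂(v) = O₁(u) ∪ O₁(v), and O₁(w) = O₂(w) for all w ≠ v. Moreover, in this case u and v are uniquely determined by O₁ and O₂. -/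
/-- Componentwise order on ornamentations. -/
def ornLE {V : Type*} (O₁ O₂ : V → Set V) : Prop := ∀ v, O₁ v ⊆ O₂ v

def ornLT {V : Type*} (O₁ O₂ : V → Set V) : Prop := ornLE O₁ O₂ ∧ O₁ ≠ O₂

/-- `O₁ ⋖ O₂` in the ornamentation lattice of `T`. -/
def ornCovBy {V : Type*} (T : V → V → Prop) (O₁ O₂ : V → Set V) : Prop :=
  ornLT O₁ O₂ ∧ ¬ ∃ O : V → Set V, IsOrnamentation T O ∧ ornLT O₁ O ∧ ornLT O O₂

/-!
In a directed forest with asymmetric edge relation, reachability is antisymmetric, so directed walks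
are paths; by uniqueness of paths in a forest, the directed path from `x` to `v` inside any set of
vertices passes through every `u` with `x →* u →* v`. This rigidity is what makes a cover change a
single ornament, and by exactly one join `O₁ u ∪ O₁ v`.
-/

open SimpleGraph Relation

section DirectedAcyclic

variable {V : Type*} {T : V → V → Prop}

theorem pathIn.reflTransGen {U : Set V} {a b : V} (h : pathIn T U a b) : ReflTransGen T a b :=
  ReflTransGen.mono (fun _ _ hab => hab.1) _ _ h

theorem pathIn.exists_rel_notMem_mem {U S : Set V} {x v : V} (h : pathIn T U x v)
    (hx : x ∉ S) (hv : v ∈ S) : ∃ a b, T a b ∧ a ∈ U ∧ a ∉ S ∧ b ∈ S := by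
  induction h using ReflTransGen.head_induction_on with
  | refl => exact absurd hv hx
  | @head a c hac _ ih =>
    by_cases hc : c ∈ S
    · exact ⟨a, c, hac.1, hac.2.1, hx, hc⟩
    · exact ih hc

theorem fromRel_adj_of_rel (hasymm : ∀ u v, T u v → ¬ T v u) {a b : V} (h : T a b) :
    (fromRel T).Adj a b :=
  (fromRel_adj _ _ _).2 ⟨by rintro rfl; exact hasymm a a h h, Or.inl h⟩

namespace SimpleGraph.Walk

def IsDirected {a b : V} (p : (fromRel T).Walk a b) : Prop :=
  ∀ d ∈ p.darts, T d.fst d.snd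

theorem isDirected_nil {a : V} : (nil : (fromRel T).Walk a a).IsDirected := by
  simp [IsDirected]

theorem isDirected_cons_iff {a b c : V} (h : (fromRel T).Adj a b) (p : (fromRel T).Walk b c) :
    (cons h p).IsDirected ↔ T a b ∧ p.IsDirected := by
  simp [IsDirected]

theorem IsDirected.append {a b c : V} {p : (fromRel T).Walk a b} {q : (fromRel T).Walk b c}
    (hp : p.IsDirected) (hq : q.IsDirected) : (p.append q).IsDirected := by
  simp only [IsDirected, darts_append, List.mem_append]
  rintro d (hd | hd)
  exacts [hp d hd, hq d hd]

theorem IsDirected.bypass [DecidableEq V] {a b : V} {p : (fromRel T).Walk a b}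
    (hp : p.IsDirected) : p.bypass.IsDirected :=
  fun d hd => hp d (p.darts_bypass_subset_darts hd)

theorem IsDirected.reflTransGen_of_mem_support {a b z : V} {p : (fromRel T).Walk a b}
    (hp : p.IsDirected) (hz : z ∈ p.support) : ReflTransGen T a z := by
  induction p with
  | nil => obtain rfl := List.mem_singleton.1 hz; exact .refl
  | cons h q ih =>
    rw [isDirected_cons_iff] at hp
    rcases List.mem_cons.1 (support_cons h q ▸ hz) with rfl | hz
    · exact .refl
    · exact .head hp.1 (ih hp.2 hz)

end SimpleGraph.Walk

theorem pathIn.exists_isDirected (hasymm : ∀ u v, T u v → ¬ T v u) {U : Set V} {a b : V}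
    (h : pathIn T U a b) (ha : a ∈ U) :
    ∃ p : (fromRel T).Walk a b, p.IsDirected ∧ ∀ z ∈ p.support, z ∈ U := by
  induction h using ReflTransGen.head_induction_on with
  | refl => exact ⟨.nil, Walk.isDirected_nil, by simpa using ha⟩
  | @head a c hac _ ih =>
    obtain ⟨p, hp, hpU⟩ := ih hac.2.2
    refine ⟨.cons (fromRel_adj_of_rel hasymm hac.1) p,
      (Walk.isDirected_cons_iff _ _).2 ⟨hac.1, hp⟩, ?_⟩
    simpa [hac.2.1] using hpU

theorem exists_isDirected_of_reflTransGen (hasymm : ∀ u v, T u v → ¬ T v u) {a b : V}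
    (h : ReflTransGen T a b) : ∃ p : (fromRel T).Walk a b, p.IsDirected :=
  let ⟨p, hp, _⟩ := pathIn.exists_isDirected (U := Set.univ) hasymm
    (ReflTransGen.mono (fun _ _ hab => ⟨hab, trivial, trivial⟩) _ _ h) trivial
  ⟨p, hp⟩

/-- If `a → c →* a`, the bypass of the directed walk from `c` back to `a` is a path, hence the edge
`ca` itself, traversed against `T a c`. -/
theorem reflTransGen_antisymm (hT : (fromRel T).IsAcyclic) (hasymm : ∀ u v, T u v → ¬ T v u)
    {a b : V} (hab : ReflTransGen T a b) (hba : ReflTransGen T b a) : a = b := by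
  classical
  rcases hab.cases_head with rfl | ⟨c, hac, hcb⟩
  · rfl
  obtain ⟨p, hp⟩ := exists_isDirected_of_reflTransGen hasymm (hcb.trans hba)
  have hca := (fromRel_adj_of_rel hasymm hac).symm
  have hedge : p.bypass = .cons hca .nil :=
    congrArg Subtype.val <|
      (hT.subsingleton_path c a).elim ⟨p.bypass, p.bypass_isPath⟩ (Path.singleton hca)
  have := hp.bypass ⟨(c, a), hca⟩ (by simp [hedge])
  exact absurd this (hasymm a c hac)

theorem SimpleGraph.Walk.IsDirected.isPath (hT : (fromRel T).IsAcyclic)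
    (hasymm : ∀ u v, T u v → ¬ T v u) {a b : V} {p : (fromRel T).Walk a b}
    (hp : p.IsDirected) : p.IsPath := by
  induction p with
  | nil => exact .nil
  | @cons a c _ h q ih =>
    rw [isDirected_cons_iff] at hp
    refine (ih hp.2).cons fun ha => ?_
    have hac : a = c := reflTransGen_antisymm hT hasymm (.single hp.1)
      (hp.2.reflTransGen_of_mem_support ha)
    exact hasymm a a (hac ▸ hp.1) (hac ▸ hp.1)

theorem pathIn.mem_of_reflTransGen (hT : (fromRel T).IsAcyclic)
    (hasymm : ∀ u v, T u v → ¬ T v u) {U : Set V} {x u v : V} (h : pathIn T U x v) (hx : x ∈ U)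
    (hxu : ReflTransGen T x u) (huv : ReflTransGen T u v) : u ∈ U := by
  obtain ⟨p, hp, hpU⟩ := h.exists_isDirected hasymm hx
  obtain ⟨q₁, hq₁⟩ := exists_isDirected_of_reflTransGen hasymm hxu
  obtain ⟨q₂, hq₂⟩ := exists_isDirected_of_reflTransGen hasymm huv
  have hpq : p = q₁.append q₂ := congrArg Subtype.val <|
    (hT.subsingleton_path x v).elim ⟨p, hp.isPath hT hasymm⟩ ⟨_, (hq₁.append hq₂).isPath hT hasymm⟩
  exact hpU u (hpq ▸ Walk.mem_support_append_iff _ _ |>.2 (.inr q₂.start_mem_support))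

end DirectedAcyclic

section Ornamentation

variable {V : Type*} {T : V → V → Prop}

theorem IsOrnament.reflTransGen {v u : V} {U : Set V} (hU : IsOrnament T v U) (hu : u ∈ U) :
    ReflTransGen T u v :=
  (hU.2 u hu).reflTransGen

theorem IsOrnament.union {u v y : V} {A B : Set V} (hA : IsOrnament T u A) (hB : IsOrnament T v B)
    (huy : T u y) (hy : y ∈ B) : IsOrnament T v (A ∪ B) := by
  have toA : ∀ {a b}, pathIn T A a b → pathIn T (A ∪ B) a b :=
    ReflTransGen.mono (fun _ _ h => ⟨h.1, .inl h.2.1, .inl h.2.2⟩) _ _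
  have toB : ∀ {a b}, pathIn T B a b → pathIn T (A ∪ B) a b :=
    ReflTransGen.mono (fun _ _ h => ⟨h.1, .inr h.2.1, .inr h.2.2⟩) _ _
  refine ⟨.inr hB.1, ?_⟩
  rintro s (hs | hs)
  · exact ((toA (hA.2 s hs)).tail ⟨huy, .inl hA.1, .inr hy⟩).trans (toB (hB.2 y hy))
  · exact toB (hB.2 s hs)

theorem IsOrnamentation.eq_of_mem_of_mem (hT : (fromRel T).IsAcyclic)
    (hasymm : ∀ u v, T u v → ¬ T v u) {O : V → Set V} (hO : IsOrnamentation T O) {u v : V}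
    (huv : u ∈ O v) (hvu : v ∈ O u) : u = v :=
  reflTransGen_antisymm hT hasymm ((hO.1 v).reflTransGen huv) ((hO.1 u).reflTransGen hvu)

theorem IsOrnamentation.piecewise {O₁ O₂ : V → Set V} (h₁ : IsOrnamentation T O₁)
    (h₂ : IsOrnamentation T O₂) (hle : O₁ ≤ O₂) (S : Set V) [∀ z, Decidable (z ∈ S)]
    (hS : ∀ z ∈ S, O₁ z ⊆ S) : IsOrnamentation T (S.piecewise O₁ O₂) := by
  have hle' : S.piecewise O₁ O₂ ≤ O₂ := Set.piecewise_le (fun z _ => hle z) fun z _ => le_rfl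
  refine ⟨fun z => ?_, fun s z hs => ?_⟩
  · by_cases hz : z ∈ S <;> simp [hz, h₁.1 z, h₂.1 z]
  by_cases hz : z ∈ S
  · rw [Set.piecewise_eq_of_mem _ _ _ hz] at hs ⊢
    rw [Set.piecewise_eq_of_mem _ _ _ (hS z hz hs)]
    exact h₁.2 s z hs
  · rw [Set.piecewise_eq_of_notMem _ _ _ hz] at hs ⊢
    exact (hle' s).trans (h₂.2 s z hs)

theorem IsOrnamentation.update [DecidableEq V] {O : V → Set V} (hO : IsOrnamentation T O) {u v : V}
    (hv : IsOrnament T v (O u ∪ O v)) (hu : ∀ z ≠ v, v ∈ O z → u ∈ O z) :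
    IsOrnamentation T (Function.update O v (O u ∪ O v)) := by
  refine ⟨fun z => ?_, fun s z hs => ?_⟩
  · rcases eq_or_ne z v with rfl | hz
    · simpa using hv
    · simpa [hz] using hO.1 z
  rcases eq_or_ne z v with rfl | hz
  · rcases eq_or_ne s z with rfl | hs'
    · exact le_rfl
    simp only [Function.update_self, Function.update_of_ne hs'] at hs ⊢
    rcases hs with hs | hs
    exacts [(hO.2 s u hs).trans Set.subset_union_left, (hO.2 s z hs).trans Set.subset_union_right]
  · rw [Function.update_of_ne hz] at hs ⊢
    rcases eq_or_ne s v with rfl | hs'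
    · simpa using Set.union_subset (hO.2 u z (hu z hz hs)) (hO.2 s z hs)
    · simpa [hs'] using hO.2 s z hs

theorem ornCovBy_iff {O₁ O₂ : V → Set V} : ornCovBy T O₁ O₂ ↔ O₁ < O₂ ∧
    ∀ O, IsOrnamentation T O → O₁ ≤ O → O ≤ O₂ → O = O₁ ∨ O = O₂ := by
  simp only [ornCovBy, ornLT, ornLE, lt_iff_le_and_ne, Pi.le_def, not_exists]
  refine and_congr_right fun _ => forall_congr' fun O => ?_
  rw [@eq_comm _ O O₁]
  tauto

def IsOrnJoinStep (O₁ O₂ : V → Set V) (u v : V) : Prop :=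
  u ∉ O₁ v ∧ O₂ v = O₁ u ∪ O₁ v ∧ ∀ w, w ≠ v → O₁ w = O₂ w

variable {O₁ O₂ : V → Set V}

theorem IsOrnJoinStep.unique (hT : (fromRel T).IsAcyclic) (hasymm : ∀ u v, T u v → ¬ T v u)
    (h₁ : IsOrnamentation T O₁) {u v u' v' : V} (h : IsOrnJoinStep O₁ O₂ u v)
    (h' : IsOrnJoinStep O₁ O₂ u' v') : u = u' ∧ v = v' := by
  obtain ⟨hu, hv, -⟩ := h
  obtain ⟨hu', hv', hw'⟩ := h'
  obtain rfl : v = v' := by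
    by_contra hne
    have : u ∈ O₂ v := hv ▸ .inl (h₁.1 u).1
    exact hu (hw' v hne ▸ this)
  have hunion : O₁ u ∪ O₁ v = O₁ u' ∪ O₁ v := hv.symm.trans hv'
  have hu'u : u' ∈ O₁ u := (hunion ▸ .inl (h₁.1 u').1 : u' ∈ O₁ u ∪ O₁ v).resolve_right hu'
  have huu' : u ∈ O₁ u' := (hunion ▸ .inl (h₁.1 u).1 : u ∈ O₁ u' ∪ O₁ v).resolve_right hu
  exact ⟨h₁.eq_of_mem_of_mem hT hasymm huu' hu'u, rfl⟩

/-- An ornamentation `O` strictly above `O₁` must enlarge the ornament at `v` by some `x ∈ O₁ u`;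
its directed path from `x` to `v` inside `O v` then runs through `u`, so `O₁ u ⊆ O v`. -/
theorem IsOrnJoinStep.ornCovBy (hT : (fromRel T).IsAcyclic) (hasymm : ∀ u v, T u v → ¬ T v u)
    (h₁ : IsOrnamentation T O₁) (h₂ : IsOrnamentation T O₂) {u v : V}
    (h : IsOrnJoinStep O₁ O₂ u v) : ornCovBy T O₁ O₂ := by
  obtain ⟨hu, hv, hw⟩ := h
  have hle : O₁ ≤ O₂ := fun z => by
    rcases eq_or_ne z v with rfl | hz
    · exact hv ▸ Set.subset_union_right
    · exact (hw z hz).le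
  have huv₂ : u ∈ O₂ v := hv ▸ .inl (h₁.1 u).1
  refine ornCovBy_iff.2 ⟨lt_of_le_of_ne hle fun h => hu (h ▸ huv₂), fun O hO h₁O hO₂ => ?_⟩
  have hOw : ∀ w ≠ v, O w = O₁ w := fun w hwv => le_antisymm (hw w hwv ▸ hO₂ w) (h₁O w)
  by_cases hsub : O v ⊆ O₁ v
  · left
    funext z
    rcases eq_or_ne z v with rfl | hz
    exacts [hsub.antisymm (h₁O z), hOw z hz]
  right
  obtain ⟨x, hxO, hx₁⟩ := Set.not_subset.1 hsub
  have hxu : x ∈ O₁ u := (hv ▸ hO₂ v hxO : x ∈ O₁ u ∪ O₁ v).resolve_right hx₁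
  have huO : u ∈ O v := ((hO.1 v).2 x hxO).mem_of_reflTransGen hT hasymm hxO
    ((h₁.1 u).reflTransGen hxu) ((h₂.1 v).reflTransGen huv₂)
  have huv : u ≠ v := by rintro rfl; exact hu (h₁.1 u).1
  funext z
  rcases eq_or_ne z v with rfl | hz
  · refine (hO₂ z).antisymm ?_
    rw [hv]
    exact Set.union_subset (hOw u huv ▸ hO.2 u z huO) (h₁O z)
  · rw [hOw z hz, hw z hz]

/-- Keeping `O₁` on the down-closed set `O₁ v` and `O₂` elsewhere gives an intermediate
ornamentation, so a cover cannot change the ornament at any `w ∉ O₁ v`. -/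
theorem ornCovBy.mem_of_ne (h₁ : IsOrnamentation T O₁) (h₂ : IsOrnamentation T O₂)
    (hc : ornCovBy T O₁ O₂) {v w : V} (hv : O₁ v ≠ O₂ v) (hw : O₁ w ≠ O₂ w) : w ∈ O₁ v := by
  classical
  obtain ⟨hlt, hmid⟩ := ornCovBy_iff.1 hc
  by_contra hwv
  have hO := h₁.piecewise h₂ hlt.le (O₁ v) fun z hz => h₁.2 z v hz
  rcases hmid _ hO (Set.le_piecewise (fun _ _ => le_rfl) fun z _ => hlt.le z)
      (Set.piecewise_le (fun z _ => hlt.le z) fun _ _ => le_rfl) with h | h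
  · exact hw (by rw [← h, Set.piecewise_eq_of_notMem _ _ _ hwv])
  · exact hv (by rw [← h, Set.piecewise_eq_of_mem _ _ _ (h₁.1 v).1])

/-- The ornament at the unique changed vertex `v` is enlarged by some `x ∈ O₂ v \ O₁ v`; where the
directed path from `x` to `v` inside `O₂ v` first enters `O₁ v`, it leaves a vertex `u`, and
joining `O₁ u` into the ornament at `v` already gives an ornamentation between `O₁` and `O₂`. -/
theorem ornCovBy.exists_isOrnJoinStep (hT : (fromRel T).IsAcyclic)
    (hasymm : ∀ u v, T u v → ¬ T v u) (h₁ : IsOrnamentation T O₁) (h₂ : IsOrnamentation T O₂)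
    (hc : ornCovBy T O₁ O₂) : ∃ u v, IsOrnJoinStep O₁ O₂ u v := by
  classical
  obtain ⟨hlt, hmid⟩ := ornCovBy_iff.1 hc
  obtain ⟨v, hv⟩ := Function.ne_iff.1 hlt.ne
  have hw : ∀ w, w ≠ v → O₁ w = O₂ w := fun w hwv => by
    by_contra hw
    exact hwv (h₁.eq_of_mem_of_mem hT hasymm (hc.mem_of_ne h₁ h₂ hv hw) (hc.mem_of_ne h₁ h₂ hw hv))
  obtain ⟨x, hx₂, hx₁⟩ := Set.not_subset.1 fun h => hv ((hlt.le v).antisymm h)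
  obtain ⟨u, y, huy, hu₂, hu₁, hy⟩ :=
    ((h₂.1 v).2 x hx₂).exists_rel_notMem_mem hx₁ (h₁.1 v).1
  have hO := h₁.update ((h₁.1 u).union (h₁.1 v) huy hy) fun z hz hvz =>
    (hw z hz).symm ▸ h₂.2 v z (hlt.le z hvz) hu₂
  have h₁O : O₁ ≤ Function.update O₁ v (O₁ u ∪ O₁ v) :=
    le_update_iff.2 ⟨Set.subset_union_right, fun _ _ => le_rfl⟩
  have hO₂ : Function.update O₁ v (O₁ u ∪ O₁ v) ≤ O₂ :=
    update_le_iff.2 ⟨Set.union_subset ((hlt.le u).trans (h₂.2 u v hu₂)) (hlt.le v),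
      fun z hz => hlt.le z⟩
  rcases hmid _ hO h₁O hO₂ with h | h
  · have : u ∈ Function.update O₁ v (O₁ u ∪ O₁ v) v := by simp [(h₁.1 u).1]
    exact absurd (h ▸ this) hu₁
  · exact ⟨u, v, hu₁, by rw [← h, Function.update_self], hw⟩

end Ornamentation

theorem tree_orn_cover_general {V : Type*} (T : V → V → Prop)
    (htree : (SimpleGraph.fromRel T).IsTree)
    (hasymm : ∀ u v, T u v → ¬ T v u)
    (O₁ O₂ : V → Set V) (h₁ : IsOrnamentation T O₁) (h₂ : IsOrnamentation T O₂) :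
    (ornCovBy T O₁ O₂ ↔ ∃ u v : V, u ∉ O₁ v ∧ O₂ v = O₁ u ∪ O₁ v ∧
      ∀ w : V, w ≠ v → O₁ w = O₂ w) ∧
    (ornCovBy T O₁ O₂ → ∀ u v u' v' : V,
      (u ∉ O₁ v ∧ O₂ v = O₁ u ∪ O₁ v ∧ ∀ w : V, w ≠ v → O₁ w = O₂ w) →
      (u' ∉ O₁ v' ∧ O₂ v' = O₁ u' ∪ O₁ v' ∧ ∀ w : V, w ≠ v' → O₁ w = O₂ w) →
      u = u' ∧ v = v') := by
  have hT := htree.isAcyclic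
  exact ⟨⟨fun hc => hc.exists_isOrnJoinStep hT hasymm h₁ h₂,
      fun ⟨_, _, h⟩ => IsOrnJoinStep.ornCovBy hT hasymm h₁ h₂ h⟩,
    fun _ _ _ _ _ => IsOrnJoinStep.unique hT hasymm h₁⟩

/-- Description of the cover relations in the ornamentation lattice of a directed tree,
together with the uniqueness of the witnessing pair `(u, v)`. -/
theorem tree_orn_cover {V : Type*} (T : V → V → Prop)
    (htree : (SimpleGraph.fromRel T).IsTree)
    (hirr : ∀ v, ¬ T v v) (hasymm : ∀ u v, T u v → ¬ T v u)
    (O₁ O₂ : V → Set V) (h₁ : IsOrnamentation T O₁) (h₂ : IsOrnamentation T O₂) :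
    (ornCovBy T O₁ O₂ ↔ ∃ u v : V, u ∉ O₁ v ∧ O₂ v = O₁ u ∪ O₁ v ∧
      ∀ w : V, w ≠ v → O₁ w = O₂ w) ∧
    (ornCovBy T O₁ O₂ → ∀ u v u' v' : V,
      (u ∉ O₁ v ∧ O₂ v = O₁ u ∪ O₁ v ∧ ∀ w : V, w ≠ v → O₁ w = O₂ w) →
      (u' ∉ O₁ v' ∧ O₂ v' = O₁ u' ∪ O₁ v' ∧ ∀ w : V, w ≠ v' → O₁ w = O₂ w) →
      u = u' ∧ v = v') :=
  tree_orn_cover_general T htree hasymm O₁ O₂ h₁ h₂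
end

section
/- Let T be an unstarred directed tree, i.e., there are no vertices u,v such that u has at least two incoming edges, v has at least two outgoing edges, and T has a directed path from u to v. Then every transitively biclosed reorientation of tc(T) is acyclic. -/
/-!
Take a shortest directed cycle `g 0 → g 1 → ⋯ → g n = g 0` of the reorientation. A chord would
shorten it, so its vertices are pairwise incomparable in `tc(T)` except for consecutive ones.
Biclosedness makes two consecutive steps in the same direction compose to a chord, so the steps
alternate and `n ≥ 4`: the cycle is an induced alternating cycle of the comparability graph.

It has a peak `g k < g (k + 1) > g (k + 2)`. The directed paths from `g k` and `g (k + 2)` to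
`g (k + 1)` merge at a vertex `y` with two in-neighbours; by unstarredness, everything above `y`
is a chain. Deleting the tree edge `x → y` through which the path from `g k` enters `y` cuts
the tree into two sides, and the cycle must return from the side of `y` to the side of `x`. The
step where it does so descends through `x → y`, so its upper end lies above `y` and is therefore
comparable with the peak `g (k + 1)`: a chord.
-/

/-- The reorientation of `tcT` with reversed edge set `rev`. -/
def reorient {V : Type*} (tcT rev : V → V → Prop) : V → V → Prop :=
  fun u v => (tcT u v ∧ ¬ rev u v) ∨ (tcT v u ∧ rev v u)

/-- A relation is acyclic if it has no directed cycle. -/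
def AcyclicRel {V : Type*} (R : V → V → Prop) : Prop :=
  ∀ v, ¬ Relation.TransGen R v v

open Relation

namespace BiclosedReorientation

theorem even_of_alternating {p : ℕ → Prop} (halt : ∀ i, p (i + 1) ↔ ¬ p i) {n : ℕ}
    (hn : p n ↔ p 0) : Even n := by
  have hpar : ∀ i, p i ↔ (p 0 ↔ Even i) := by
    intro i
    induction i with
    | zero => simp
    | succ i ih => rw [halt, ih, Nat.even_add_one]; tauto
  rw [hpar] at hn
  tauto

theorem exists_and_not_succ_of_le {P : ℕ → Prop} {a b : ℕ} (hab : a ≤ b) (ha : P a) (hb : ¬ P b) :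
    ∃ t, a ≤ t ∧ t < b ∧ P t ∧ ¬ P (t + 1) := by
  induction b, hab using Nat.le_induction with
  | base => exact absurd ha hb
  | succ b hab ih =>
    by_cases h : P b
    · exact ⟨b, hab, b.lt_succ_self, h, hb⟩
    · obtain ⟨t, hat, htb, ht, ht'⟩ := ih h
      exact ⟨t, hat, htb.trans b.lt_succ_self, ht, ht'⟩

variable {V : Type*}

section CyclicWalk

variable {R : V → V → Prop} {n : ℕ} {g : ℕ → V}

/-- A closed `R`-walk of length `n`, unrolled to an `n`-periodic sequence. -/
def IsCyclicWalk (R : V → V → Prop) (n : ℕ) (g : ℕ → V) : Prop :=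
  0 < n ∧ (∀ i, R (g i) (g (i + 1))) ∧ ∀ i, g (i + n) = g i

theorem exists_walk_of_transGen {a b : V} (h : TransGen R a b) :
    ∃ m, 0 < m ∧ ∃ x : ℕ → V, x 0 = a ∧ x m = b ∧ ∀ i < m, R (x i) (x (i + 1)) := by
  induction h with
  | @single b hab =>
    refine ⟨1, one_pos, fun i => if i = 0 then a else b, by simp, by simp, fun i hi => ?_⟩
    obtain rfl : i = 0 := by omega
    simpa using hab
  | @tail c d _ hcd ih =>
    obtain ⟨m, hm, x, hx0, hxm, hx⟩ := ih
    refine ⟨m + 1, m.succ_pos, fun i => if i ≤ m then x i else d, by simp [hx0], by simp,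
      fun i hi => ?_⟩
    rcases Nat.lt_or_ge i m with h | h
    · simpa [h.le, Nat.succ_le_of_lt h] using hx i h
    · obtain rfl : i = m := by omega
      simpa [hxm] using hcd

theorem isCyclicWalk_mod {m : ℕ} {x : ℕ → V} (hm : 0 < m) (hx : ∀ i < m, R (x i) (x (i + 1)))
    (hxm : x m = x 0) : IsCyclicWalk R m (fun i => x (i % m)) := by
  refine ⟨hm, fun i => ?_, fun i => by simp⟩
  have hi := Nat.mod_lt i hm
  have hsucc : (i + 1) % m = (i % m + 1) % m := (Nat.mod_add_mod i m 1).symm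
  rcases Nat.lt_or_ge (i % m + 1) m with h | h
  · simpa only [hsucc, Nat.mod_eq_of_lt h] using hx _ hi
  · have hlast : i % m + 1 = m := by omega
    simpa only [hsucc, hlast, Nat.mod_self, hxm] using hx _ hi

theorem exists_isCyclicWalk {v : V} (h : TransGen R v v) : ∃ n g, IsCyclicWalk R n g := by
  obtain ⟨m, hm, x, hx0, hxm, hx⟩ := exists_walk_of_transGen h
  exact ⟨m, _, isCyclicWalk_mod hm hx (hxm.trans hx0.symm)⟩

theorem IsCyclicWalk.three_le (hR : ∀ x y, R x y → ¬ R y x) (hg : IsCyclicWalk R n g) :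
    3 ≤ n := by
  obtain ⟨hn, hstep, hper⟩ := hg
  by_contra! h
  interval_cases n
  · have h00 := hstep 0
    rw [hper 0] at h00
    exact hR _ _ h00 h00
  · have h10 := hstep 1
    rw [hper 0] at h10
    exact hR _ _ (hstep 0) h10

theorem IsCyclicWalk.shortcut (hg : IsCyclicWalk R n g) {i j : ℕ} (hij : i + 1 < j)
    (hjn : j ≤ i + n) (hR : R (g i) (g j)) : ∃ g', IsCyclicWalk R (i + n - j + 1) g' := by
  refine ⟨_, isCyclicWalk_mod (x := fun t => if t = 0 then g i else g (j + t - 1)) (by omega)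
    (fun t _ => ?_) ?_⟩
  · rcases t with _ | t
    · simpa using hR
    · simpa [Nat.add_assoc] using hg.2.1 (j + t)
  · simp only [Nat.add_eq_zero_iff, one_ne_zero, and_false, ↓reduceIte]
    rw [show j + (i + n - j + 1) - 1 = i + n by omega, hg.2.2]

def IsInducedCycle (C : V → V → Prop) (n : ℕ) (g : ℕ → V) : Prop :=
  (∀ i, C (g i) (g (i + 1))) ∧ (∀ i, g (i + n) = g i) ∧
    ∀ i j, i + 2 ≤ j → j + 2 ≤ i + n → ¬ C (g i) (g j)

theorem IsInducedCycle.exists_peak {r : V → V → Prop}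
    (hg : IsInducedCycle (SymmGen (ReflTransGen r)) n g) (hn : 4 ≤ n) :
    ∃ k, ReflTransGen r (g k) (g (k + 1)) ∧ ReflTransGen r (g (k + 2)) (g (k + 1)) := by
  obtain ⟨hstep, -, hind⟩ := hg
  by_cases h01 : ReflTransGen r (g 0) (g 1)
  · exact ⟨0, h01, (hstep 1).resolve_left fun h12 =>
      hind 0 2 le_rfl (by omega) (.inl (h01.trans h12))⟩
  · have h10 := (hstep 0).resolve_left h01
    have h12 : ReflTransGen r (g 1) (g 2) :=
      (hstep 1).resolve_right fun h21 => hind 0 2 le_rfl (by omega) (.inr (h21.trans h10))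
    exact ⟨1, h12, (hstep 2).resolve_left fun h23 =>
      hind 1 3 le_rfl (by omega) (.inl (h12.trans h23))⟩

def IsShortestCycle (R : V → V → Prop) (n : ℕ) (g : ℕ → V) : Prop :=
  IsCyclicWalk R n g ∧ ∀ m g', IsCyclicWalk R m g' → n ≤ m

theorem exists_isShortestCycle (h : ∃ n g, IsCyclicWalk R n g) :
    ∃ n g, IsShortestCycle R n g := by
  classical
  obtain ⟨g, hg⟩ := Nat.find_spec h
  exact ⟨_, g, hg, fun m g' hg' => Nat.find_min' h ⟨g', hg'⟩⟩

theorem IsShortestCycle.not_rel (hg : IsShortestCycle R n g) {i j : ℕ} (hij : i + 1 < j)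
    (hjn : j ≤ i + n) : ¬ R (g i) (g j) := fun hR => by
  obtain ⟨g', hg'⟩ := hg.1.shortcut hij hjn hR
  have := hg.2 _ _ hg'
  omega

end CyclicWalk

section Reorient

variable {r rev : V → V → Prop} {x y z : V}

theorem symmGen_of_reorient (h : reorient (TransGen r) rev x y) : SymmGen (TransGen r) x y :=
  h.imp And.left And.left

theorem reorient_or_reorient (h : TransGen r x y) :
    reorient (TransGen r) rev x y ∨ reorient (TransGen r) rev y x := by
  by_cases hxy : rev x y
  · exact .inr (.inr ⟨h, hxy⟩)
  · exact .inl (.inl ⟨h, hxy⟩)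

theorem reorient_asymm (hr : ∀ x, ¬ TransGen r x x) (hxy : reorient (TransGen r) rev x y) :
    ¬ reorient (TransGen r) rev y x := by
  rcases hxy with ⟨hxy, hn⟩ | ⟨hyx, hrev⟩ <;> rintro (⟨h, h'⟩ | ⟨h, h'⟩)
  · exact hr _ (hxy.trans h)
  · exact hn h'
  · exact h' hrev
  · exact hr _ (hyx.trans h)

theorem not_rev_of_reorient (hr : ∀ x, ¬ TransGen r x x) (h : reorient (TransGen r) rev x y)
    (hxy : TransGen r x y) : ¬ rev x y :=
  (h.resolve_right fun h' => hr _ (hxy.trans h'.1)).2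

theorem rev_of_reorient (hr : ∀ x, ¬ TransGen r x x) (h : reorient (TransGen r) rev x y)
    (hyx : TransGen r y x) : rev y x :=
  (h.resolve_left fun h' => hr _ (hyx.trans h'.1)).2

theorem reorient_trans_of_transGen (hr : ∀ x, ¬ TransGen r x x)
    (hcoclosed : ∀ u v w, TransGen r u v → ¬ rev u v → TransGen r v w → ¬ rev v w → ¬ rev u w)
    (hxy : reorient (TransGen r) rev x y) (hyz : reorient (TransGen r) rev y z)
    (hxy' : TransGen r x y) (hyz' : TransGen r y z) : reorient (TransGen r) rev x z :=
  .inl ⟨hxy'.trans hyz', hcoclosed x y z hxy' (not_rev_of_reorient hr hxy hxy') hyz'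
    (not_rev_of_reorient hr hyz hyz')⟩

theorem reorient_trans_of_transGen_swap (hr : ∀ x, ¬ TransGen r x x)
    (hclosed : ∀ u v w, rev u v → rev v w → rev u w)
    (hxy : reorient (TransGen r) rev x y) (hyz : reorient (TransGen r) rev y z)
    (hyx : TransGen r y x) (hzy : TransGen r z y) : reorient (TransGen r) rev x z :=
  .inr ⟨hzy.trans hyx, hclosed z y x (rev_of_reorient hr hyz hzy) (rev_of_reorient hr hxy hyx)⟩

variable {n : ℕ} {g : ℕ → V}

theorem IsShortestCycle.transGen_succ_iff (hr : ∀ x, ¬ TransGen r x x)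
    (hclosed : ∀ u v w, rev u v → rev v w → rev u w)
    (hcoclosed : ∀ u v w, TransGen r u v → ¬ rev u v → TransGen r v w → ¬ rev v w → ¬ rev u w)
    (hg : IsShortestCycle (reorient (TransGen r) rev) n g) (i : ℕ) :
    TransGen r (g (i + 1)) (g (i + 1 + 1)) ↔ ¬ TransGen r (g i) (g (i + 1)) := by
  have h3 := hg.1.three_le fun _ _ => reorient_asymm hr
  have hstep := hg.1.2.1
  have hchord : ¬ reorient (TransGen r) rev (g i) (g (i + 1 + 1)) :=
    hg.not_rel (by omega) (by omega)
  constructor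
  · intro h12 h01
    exact hchord (reorient_trans_of_transGen hr hcoclosed (hstep i) (hstep (i + 1)) h01 h12)
  · intro h01
    by_contra h12
    exact hchord (reorient_trans_of_transGen_swap hr hclosed (hstep i) (hstep (i + 1))
      ((symmGen_of_reorient (hstep i)).resolve_left h01)
      ((symmGen_of_reorient (hstep (i + 1))).resolve_left h12))

theorem IsShortestCycle.four_le (hr : ∀ x, ¬ TransGen r x x)
    (hclosed : ∀ u v w, rev u v → rev v w → rev u w)
    (hcoclosed : ∀ u v w, TransGen r u v → ¬ rev u v → TransGen r v w → ¬ rev v w → ¬ rev u w)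
    (hg : IsShortestCycle (reorient (TransGen r) rev) n g) : 4 ≤ n := by
  have h3 := hg.1.three_le fun _ _ => reorient_asymm hr
  have hper := hg.1.2.2
  have heven : Even n := by
    refine even_of_alternating (p := fun i => TransGen r (g i) (g (i + 1)))
      (hg.transGen_succ_iff hr hclosed hcoclosed) ?_
    rw [← hper 0, ← hper 1, zero_add, add_comm]
  obtain ⟨k, rfl⟩ := heven
  omega

theorem IsShortestCycle.isInducedCycle (hg : IsShortestCycle (reorient (TransGen r) rev) n g) :
    IsInducedCycle (SymmGen (ReflTransGen r)) n g := by
  obtain ⟨-, hstep, hper⟩ := hg.1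
  have hnot : ∀ i j, i + 2 ≤ j → j + 2 ≤ i + n → ¬ ReflTransGen r (g i) (g j) := by
    intro i j hij hji h
    rcases reflTransGen_iff_eq_or_transGen.mp h with heq | h
    · exact hg.not_rel (j := j + 1) (by omega) (by omega) (heq ▸ hstep j)
    · rcases reorient_or_reorient (rev := rev) h with h | h
      · exact hg.not_rel (by omega) (by omega) h
      · exact hg.not_rel (i := j) (j := i + n) (by omega) (by omega) (by rwa [hper])
  refine ⟨fun i => (symmGen_of_reorient (hstep i)).imp TransGen.to_reflTransGen
    TransGen.to_reflTransGen, hper,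
    fun i j hij hji h => h.elim (hnot i j hij hji) fun h => ?_⟩
  exact hnot j (i + n) (by omega) (by omega) (by rwa [hper])

end Reorient

section Forest

variable {T : V → V → Prop}

/-- `Y` is a set closed under `T`-successors that `T` enters only through the edge `x → y`. -/
def IsCut (T : V → V → Prop) (x y : V) (Y : V → Prop) : Prop :=
  ¬ Y x ∧ Y y ∧ (∀ u v, T u v → Y u → Y v) ∧ ∀ u v, T u v → ¬ Y u → Y v → u = x ∧ v = y

theorem exists_isCut (hT : (SimpleGraph.fromRel T).IsAcyclic) (hasymm : ∀ u v, T u v → ¬ T v u)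
    {x y : V} (hxy : T x y) : ∃ Y, IsCut T x y Y := by
  set H := (SimpleGraph.fromRel T).deleteEdges {s(x, y)}
  have hadj : ∀ {u v}, T u v → (SimpleGraph.fromRel T).Adj u v := fun {u v} huv =>
    (SimpleGraph.fromRel_adj _ _ _).mpr ⟨fun h => hasymm u v huv (h ▸ huv), .inl huv⟩
  have hside : ∀ {u v}, T u v → s(u, v) ≠ s(x, y) → (H.Reachable y u ↔ H.Reachable y v) :=
    fun huv hne => ⟨fun h => h.trans (SimpleGraph.deleteEdges_adj.mpr ⟨hadj huv, hne⟩).reachable,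
      fun h => h.trans (SimpleGraph.deleteEdges_adj.mpr ⟨hadj huv, hne⟩).symm.reachable⟩
  refine ⟨H.Reachable y, fun h => SimpleGraph.isAcyclic_iff_forall_adj_isBridge.mp hT (hadj hxy)
    h.symm, .rfl, fun u v huv hu => ?_, fun u v huv hu hv => ?_⟩
  · by_cases hne : s(u, v) = s(x, y)
    · rcases Sym2.eq_iff.mp hne with ⟨-, rfl⟩ | ⟨rfl, rfl⟩
      · exact .rfl
      · exact absurd huv (hasymm _ _ hxy)
    · exact (hside huv hne).mp hu
  · by_cases hne : s(u, v) = s(x, y)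
    · rcases Sym2.eq_iff.mp hne with h | ⟨rfl, rfl⟩
      · exact h
      · exact absurd huv (hasymm _ _ hxy)
    · exact absurd ((hside huv hne).mpr hv) hu

section IsCut

variable {x y u v : V} {Y : V → Prop}

theorem IsCut.mem_of_reflTransGen (hY : IsCut T x y Y) (h : ReflTransGen T u v) (hu : Y u) :
    Y v := by
  induction h with
  | refl => exact hu
  | tail _ hbc ih => exact hY.2.2.1 _ _ hbc ih

theorem IsCut.reflTransGen_of_not_mem (hY : IsCut T x y Y) (h : ReflTransGen T u v) (hu : ¬ Y u)
    (hv : Y v) : ReflTransGen T u x ∧ ReflTransGen T y v := by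
  induction h with
  | refl => exact absurd hv hu
  | @tail b c hub hbc ih =>
    by_cases hb : Y b
    · exact (ih hb).imp_right fun h => h.tail hbc
    · obtain ⟨rfl, rfl⟩ := hY.2.2.2 b c hbc hb hv
      exact ⟨hub, .refl⟩

end IsCut

theorem transGen_irrefl_of_isAcyclic (hT : (SimpleGraph.fromRel T).IsAcyclic)
    (hasymm : ∀ u v, T u v → ¬ T v u) (v : V) : ¬ TransGen T v v := fun h => by
  obtain ⟨w, hvw, hwv⟩ := TransGen.head'_iff.mp h
  obtain ⟨Y, hY⟩ := exists_isCut hT hasymm hvw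
  exact hY.1 (hY.mem_of_reflTransGen hwv hY.2.1)

theorem exists_merge_edge {a a' b : V} (hab : ReflTransGen T a b) (ha'b : ReflTransGen T a' b)
    (ha'a : ¬ ReflTransGen T a' a) :
    ∃ x y, ReflTransGen T a x ∧ T x y ∧ ¬ ReflTransGen T a' x ∧ ReflTransGen T a' y ∧
      ReflTransGen T y b := by
  induction hab with
  | refl => exact absurd ha'b ha'a
  | @tail c b hac hcb ih =>
    by_cases ha'c : ReflTransGen T a' c
    · obtain ⟨x, y, hax, hxy, ha'x, ha'y, hyc⟩ := ih ha'c
      exact ⟨x, y, hax, hxy, ha'x, ha'y, hyc.tail hcb⟩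
    · exact ⟨c, b, hac, hcb, ha'c, ha'b, .refl⟩

theorem symmGen_of_nonbranching {y b c : V}
    (hy : ∀ v, ReflTransGen T y v → ∀ d e, T v d → T v e → d = e)
    (hb : ReflTransGen T y b) (hc : ReflTransGen T y c) : SymmGen (ReflTransGen T) b c := by
  induction hb using Relation.ReflTransGen.head_induction_on generalizing c with
  | refl => exact .inl hc
  | head hyy' hy'b ih =>
    rcases hc.cases_head with rfl | ⟨y'', hyy'', hy''c⟩
    · exact .inr (hy'b.head hyy')
    · obtain rfl := hy _ .refl _ _ hyy'' hyy'
      exact ih (fun v hv => hy v (hv.head hyy'')) hy''c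


def IsUnstarred (T : V → V → Prop) : Prop :=
  ¬ ∃ u v a b d e : V, a ≠ b ∧ T a u ∧ T b u ∧ d ≠ e ∧ T v d ∧ T v e ∧ ReflTransGen T u v

theorem IsUnstarred.not_isInducedCycle {T : V → V → Prop} {n : ℕ} {g : ℕ → V}
    (hT : (SimpleGraph.fromRel T).IsAcyclic) (hasymm : ∀ u v, T u v → ¬ T v u)
    (hun : IsUnstarred T) (hn : 4 ≤ n) (hg : IsInducedCycle (SymmGen (ReflTransGen T)) n g) :
    False := by
  obtain ⟨k, hpeak, hpeak'⟩ := hg.exists_peak hn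
  obtain ⟨hstep, hper, hind⟩ := hg
  have hk2 : ¬ ReflTransGen T (g (k + 2)) (g k) := fun h =>
    hind k (k + 2) le_rfl (by omega) (.inr h)
  obtain ⟨x, y, hkx, hxy, hk2x, hk2y, hyk1⟩ := exists_merge_edge hpeak hpeak' hk2
  obtain ⟨q, hk2q, hqy⟩ : ∃ q, ReflTransGen T (g (k + 2)) q ∧ T q y := by
    refine hk2y.cases_tail.resolve_left fun h => ?_
    exact hind k (k + 2) le_rfl (by omega) (.inl (h ▸ hkx.tail hxy))
  -- `y` has the two in-neighbours `x ≠ q`, so no vertex above it branches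
  have habove : ∀ b c, ReflTransGen T y b → ReflTransGen T y c → SymmGen (ReflTransGen T) b c :=
    fun b c => symmGen_of_nonbranching fun v hyv d e hvd hve => by
      by_contra hde
      exact hun ⟨y, v, x, q, d, e, fun h => hk2x (h ▸ hk2q), hxy, hqy, hde, hvd, hve, hyv⟩
  obtain ⟨Y, hY⟩ := exists_isCut hT hasymm hxy
  have hYk2 : Y (g (k + 2)) := by
    by_contra h
    exact hk2x (hY.reflTransGen_of_not_mem hk2y h hY.2.1).1
  have hYkn : ¬ Y (g (k + n)) := by
    rw [hper]
    exact fun h => hY.1 (hY.mem_of_reflTransGen hkx h)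
  obtain ⟨t, hkt, htn, hYt, hYt1⟩ := exists_and_not_succ_of_le (P := fun i => Y (g i)) (by omega)
    hYk2 hYkn
  have hdown : ReflTransGen T (g (t + 1)) (g t) :=
    (hstep t).resolve_left fun h => hYt1 (hY.mem_of_reflTransGen h hYt)
  have hyt : ReflTransGen T y (g t) := (hY.reflTransGen_of_not_mem hdown hYt1 hYt).2
  rcases hkt.eq_or_lt with rfl | hkt
  · exact transGen_irrefl_of_isAcyclic hT hasymm y (TransGen.tail' (hyt.trans hk2q) hqy)
  · exact hind (k + 1) t (by omega) (by omega) (habove _ _ hyk1 hyt)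

end Forest

end BiclosedReorientation

theorem unstarred_biclosed_acyclic_general {V : Type*} (T : V → V → Prop)
    (htree : (SimpleGraph.fromRel T).IsTree)
    (hasymm : ∀ u v, T u v → ¬ T v u)
    (hunstarred : ¬ ∃ u v a b d e : V, a ≠ b ∧ T a u ∧ T b u ∧ d ≠ e ∧ T v d ∧ T v e ∧
      Relation.ReflTransGen T u v)
    (rev : V → V → Prop)
    (hclosed : ∀ u v w, rev u v → rev v w → rev u w)
    (hcoclosed : ∀ u v w, Relation.TransGen T u v → ¬ rev u v →
      Relation.TransGen T v w → ¬ rev v w → ¬ rev u w) :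
    AcyclicRel (reorient (Relation.TransGen T) rev) := by
  intro v hv
  obtain ⟨n, g, hg⟩ := BiclosedReorientation.exists_isShortestCycle
    (BiclosedReorientation.exists_isCyclicWalk hv)
  have hirr := BiclosedReorientation.transGen_irrefl_of_isAcyclic htree.isAcyclic hasymm
  exact BiclosedReorientation.IsUnstarred.not_isInducedCycle htree.isAcyclic hasymm hunstarred
    (hg.four_le hirr hclosed hcoclosed) hg.isInducedCycle

/-- For an unstarred directed tree `T` (no vertex `u` with two incoming edges admitting a
directed path to a vertex `v` with two outgoing edges), every transitively biclosed
reorientation of `tc(T)` is acyclic. -/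
theorem unstarred_biclosed_acyclic {V : Type*} (T : V → V → Prop)
    (htree : (SimpleGraph.fromRel T).IsTree)
    (hirr : ∀ v, ¬ T v v) (hasymm : ∀ u v, T u v → ¬ T v u)
    (hunstarred : ¬ ∃ u v a b d e : V, a ≠ b ∧ T a u ∧ T b u ∧ d ≠ e ∧ T v d ∧ T v e ∧
      Relation.ReflTransGen T u v)
    (rev : V → V → Prop)
    (hsub : ∀ u v, rev u v → Relation.TransGen T u v)
    (hclosed : ∀ u v w, rev u v → rev v w → rev u w)
    (hcoclosed : ∀ u v w, Relation.TransGen T u v → ¬ rev u v →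
      Relation.TransGen T v w → ¬ rev v w → ¬ rev u w) :
    AcyclicRel (reorient (Relation.TransGen T) rev) :=
  unstarred_biclosed_acyclic_general T htree hasymm hunstarred rev hclosed hcoclosed
end
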